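/- Let n ≥ 2 be an integer, ω_{n−1} the surface area of the unit sphere S^{n−1} in ℝⁿ, and α_n = n·ω_{n−1}^{1/(n−1)}. For every nonempty bounded open set Ω ⊆ ℝⁿ and every real β > α_n, the supremum of ∫_Ω exp(β |u|^{n/(n−1)}) dx, taken over all smooth functions u : ℝⁿ → ℝ with compact support contained in Ω satisfying ∫_Ω |∇u|ⁿ dx ≤ 1, is +∞. -/

import Mathlib

/-!
Fix a ball `B(x₀, R) ⊆ Ω`, put `r = R e^{-M}`, `ω = ω_{n-1}` and `c = (ω M)^{-1/n}`. Moser's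
function `u = c · min (M, log⁺ (R / |x - x₀|))` has `|∇u| = c / |x - x₀|` on the annulus
`r ≤ |x - x₀| ≤ R` and `∇u = 0` elsewhere, so in polar coordinates its `n`-energy is
`ω cⁿ log (R / r) = 1`. On the inner ball `B(x₀, r)` it is constant, with
`β (c M)^{n/(n-1)} = γ M` where `γ = β / ω^{1/(n-1)} > n`, so the exponential integral is at
least `|B(x₀, r)| e^{γ M} = |B₁| Rⁿ e^{(γ - n) M} → ∞`.

To get a smooth function, `min (M, max (·, 0))` is replaced by a smooth clamp with slope in
`[0, 1]` whose value at `M` is at least `M - 2`; by Bernoulli's inequality this only costs the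
constant factor `e^{-2γ n/(n-1)}`.
-/

open MeasureTheory Real

/-- The surface area of the unit sphere `S^{n-1} ⊆ ℝⁿ`, equal to `n` times the
Lebesgue measure of the unit ball in `ℝⁿ`. -/
noncomputable def sphereArea (n : ℕ) : ℝ :=
  n * (volume (Metric.ball (0 : EuclideanSpace ℝ (Fin n)) 1)).toReal

open Filter Topology Metric Set Module

namespace Moser

noncomputable section

def plateau (M s : ℝ) : ℝ := smoothTransition s * smoothTransition (M - s)

theorem contDiff_plateau (M : ℝ) : ContDiff ℝ (⊤ : ℕ∞) (plateau M) :=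
  smoothTransition.contDiff.mul (smoothTransition.contDiff.comp (contDiff_const.sub contDiff_id))

theorem plateau_nonneg (M s : ℝ) : 0 ≤ plateau M s :=
  mul_nonneg (smoothTransition.nonneg _) (smoothTransition.nonneg _)

theorem plateau_le_one (M s : ℝ) : plateau M s ≤ 1 :=
  mul_le_one₀ (smoothTransition.le_one _) (smoothTransition.nonneg _) (smoothTransition.le_one _)

theorem plateau_of_nonpos {M s : ℝ} (hs : s ≤ 0) : plateau M s = 0 := by
  simp [plateau, smoothTransition.zero_of_nonpos hs]

theorem plateau_of_le {M s : ℝ} (hs : M ≤ s) : plateau M s = 0 := by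
  simp [plateau, smoothTransition.zero_of_nonpos (sub_nonpos.2 hs)]

theorem plateau_of_mem_Icc {M s : ℝ} (hs : s ∈ Icc 1 (M - 1)) : plateau M s = 1 := by
  simp [plateau, smoothTransition.one_of_one_le hs.1,
    smoothTransition.one_of_one_le (le_sub_comm.1 hs.2)]

theorem intervalIntegrable_plateau (M a b : ℝ) : IntervalIntegrable (plateau M) volume a b :=
  (contDiff_plateau M).continuous.intervalIntegrable a b

theorem integral_plateau_of_forall_eq {M a b c : ℝ} (hab : a ≤ b)
    (h : ∀ s ∈ Icc a b, plateau M s = c) : ∫ s in a..b, plateau M s = (b - a) * c := by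
  rw [intervalIntegral.integral_congr (g := fun _ => c) (by rwa [uIcc_of_le hab]),
    intervalIntegral.integral_const, smul_eq_mul]

/-- A smooth nondecreasing version of `t ↦ min (max t 0) M`. -/
def smoothClamp (M t : ℝ) : ℝ := ∫ s in (0 : ℝ)..t, plateau M s

theorem hasDerivAt_smoothClamp (M t : ℝ) : HasDerivAt (smoothClamp M) (plateau M t) t :=
  ((contDiff_plateau M).continuous.integral_hasStrictDerivAt 0 t).hasDerivAt

theorem contDiff_smoothClamp (M : ℝ) : ContDiff ℝ (⊤ : ℕ∞) (smoothClamp M) := by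
  rw [contDiff_infty_iff_deriv, funext fun t => (hasDerivAt_smoothClamp M t).deriv]
  exact ⟨fun t => (hasDerivAt_smoothClamp M t).differentiableAt, contDiff_plateau M⟩

theorem monotone_smoothClamp (M : ℝ) : Monotone (smoothClamp M) :=
  monotone_of_hasDerivAt_nonneg (hasDerivAt_smoothClamp M) (plateau_nonneg M)

theorem smoothClamp_of_nonpos {M t : ℝ} (ht : t ≤ 0) : smoothClamp M t = 0 := by
  rw [smoothClamp, intervalIntegral.integral_symm,
    integral_plateau_of_forall_eq ht fun s hs => plateau_of_nonpos hs.2, mul_zero, neg_zero]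

theorem smoothClamp_of_le {M t : ℝ} (ht : M ≤ t) : smoothClamp M t = smoothClamp M M := by
  rw [smoothClamp, ← intervalIntegral.integral_add_adjacent_intervals
      (intervalIntegrable_plateau M 0 M) (intervalIntegrable_plateau M M t),
    integral_plateau_of_forall_eq ht fun s hs => plateau_of_le hs.1, mul_zero, add_zero,
    smoothClamp]

theorem smoothClamp_nonneg (M : ℝ) {t : ℝ} (ht : 0 ≤ t) : 0 ≤ smoothClamp M t :=
  smoothClamp_of_nonpos le_rfl ▸ monotone_smoothClamp M ht

theorem sub_two_le_smoothClamp_self {M : ℝ} (hM : 2 ≤ M) : M - 2 ≤ smoothClamp M M := by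
  have hmid : smoothClamp M (M - 1) = smoothClamp M 1 + (M - 2) := by
    rw [smoothClamp, ← intervalIntegral.integral_add_adjacent_intervals
        (intervalIntegrable_plateau M 0 1) (intervalIntegrable_plateau M 1 (M - 1)),
      integral_plateau_of_forall_eq (by linarith) fun s hs => plateau_of_mem_Icc hs, smoothClamp]
    ring
  linarith [smoothClamp_nonneg M zero_le_one, monotone_smoothClamp M (sub_le_self M zero_le_one)]

/-- The profile `smoothClamp M (log (R / |x - x₀|))` as a function of `q = |x - x₀|²`.
Replacing `q` by `max q (r / 2)²`, `r = R e^{-M}`, changes nothing (the profile is constant for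
`q < r²`) but makes the profile smooth at `q = 0`. -/
def radialProfile (R M q : ℝ) : ℝ :=
  smoothClamp M (log R - log (max q ((R * exp (-M) / 2) ^ 2)) / 2)

theorem radialProfile_of_lt {R M q : ℝ} (hR : 0 < R) (hq : q < (R * exp (-M)) ^ 2) :
    radialProfile R M q = smoothClamp M M := by
  have hr : 0 < R * exp (-M) := by positivity
  have hpos : 0 < max q ((R * exp (-M) / 2) ^ 2) := lt_max_of_lt_right (by positivity)
  have hlt : log (max q ((R * exp (-M) / 2) ^ 2)) < 2 * (log R - M) := by
    have := log_lt_log hpos (max_lt hq (by nlinarith))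
    rwa [log_pow, log_mul hR.ne' (exp_pos _).ne', log_exp, Nat.cast_ofNat,
      ← sub_eq_add_neg] at this
  exact smoothClamp_of_le (by linarith)

theorem radialProfile_of_le {R M q : ℝ} (hR : 0 < R) (hq : R ^ 2 ≤ q) :
    radialProfile R M q = 0 := by
  have hle : 2 * log R ≤ log (max q ((R * exp (-M) / 2) ^ 2)) := by
    rw [← Nat.cast_ofNat, ← log_pow]
    exact log_le_log (by positivity) (hq.trans (le_max_left _ _))
  exact smoothClamp_of_nonpos (by linarith)

theorem radialProfile_eventuallyEq {R M q : ℝ} (hq : (R * exp (-M) / 2) ^ 2 < q) :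
    radialProfile R M =ᶠ[𝓝 q] fun q => smoothClamp M (log R - log q / 2) := by
  filter_upwards [eventually_gt_nhds hq] with p hp
  rw [radialProfile, max_eq_left hp.le]

theorem hasDerivAt_radialProfile {R M q : ℝ} (hq : (R * exp (-M) / 2) ^ 2 < q) :
    HasDerivAt (radialProfile R M) (plateau M (log R - log q / 2) * -(2 * q)⁻¹) q := by
  have hq0 : q ≠ 0 := ((sq_nonneg _).trans_lt hq).ne'
  have hlog : HasDerivAt (fun p => log R - log p / 2) (-(2 * q)⁻¹) q :=
    (((hasDerivAt_log hq0).div_const 2).const_sub (log R)).congr_deriv (by ring)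
  exact ((hasDerivAt_smoothClamp M _).comp q hlog).congr_of_eventuallyEq
    (radialProfile_eventuallyEq hq)

theorem contDiff_radialProfile {R M : ℝ} (hR : 0 < R) :
    ContDiff ℝ (⊤ : ℕ∞) (radialProfile R M) := by
  refine contDiff_iff_contDiffAt.2 fun q => ?_
  rcases lt_or_ge q ((R * exp (-M)) ^ 2) with hq | hq
  · refine (contDiffAt_const (c := smoothClamp M M)).congr_of_eventuallyEq ?_
    filter_upwards [eventually_lt_nhds hq] with p hp using radialProfile_of_lt hR hp
  · have hr : 0 < R * exp (-M) := by positivity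
    have hq' : (R * exp (-M) / 2) ^ 2 < q := lt_of_lt_of_le (by nlinarith) hq
    have hq0 : q ≠ 0 := ((sq_nonneg _).trans_lt hq').ne'
    exact ((contDiff_smoothClamp M).contDiffAt.comp q (contDiffAt_const.sub
      ((contDiffAt_log.2 hq0).div_const 2))).congr_of_eventuallyEq (radialProfile_eventuallyEq hq')

section RadialFunction

variable {E : Type*} [NormedAddCommGroup E]

def moserFunction (x₀ : E) (R M c : ℝ) (x : E) : ℝ :=
  c * radialProfile R M (‖x - x₀‖ ^ 2)

variable {x₀ : E} {R M c : ℝ}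

theorem contDiff_moserFunction [InnerProductSpace ℝ E] (hR : 0 < R) :
    ContDiff ℝ (⊤ : ℕ∞) (moserFunction x₀ R M c) :=
  contDiff_const.mul
    ((contDiff_radialProfile hR).comp ((contDiff_id.sub contDiff_const).norm_sq ℝ))

theorem moserFunction_of_norm_sub_lt (hR : 0 < R) {x : E} (hx : ‖x - x₀‖ < R * exp (-M)) :
    moserFunction x₀ R M c x = c * smoothClamp M M := by
  rw [moserFunction, radialProfile_of_lt hR (pow_lt_pow_left₀ hx (norm_nonneg _) two_ne_zero)]

theorem moserFunction_of_le_norm_sub (hR : 0 < R) {x : E} (hx : R ≤ ‖x - x₀‖) :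
    moserFunction x₀ R M c x = 0 := by
  rw [moserFunction, radialProfile_of_le hR (pow_le_pow_left₀ hR.le hx 2), mul_zero]

theorem tsupport_moserFunction_subset (hR : 0 < R) :
    tsupport (moserFunction x₀ R M c) ⊆ closedBall x₀ R := by
  refine closure_minimal (fun x hx => ?_) isClosed_closedBall
  by_contra h
  rw [mem_closedBall, dist_eq_norm, not_le] at h
  exact hx (moserFunction_of_le_norm_sub hR h.le)

theorem hasCompactSupport_moserFunction [ProperSpace E] (hR : 0 < R) :
    HasCompactSupport (moserFunction x₀ R M c) :=
  (isCompact_closedBall x₀ R).of_isClosed_subset (isClosed_tsupport _)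
    (tsupport_moserFunction_subset hR)

theorem fderiv_moserFunction_eq_zero [NormedSpace ℝ E] (hR : 0 < R) {x : E}
    (hx : ‖x - x₀‖ ∉ Icc (R * exp (-M)) R) :
    fderiv ℝ (moserFunction x₀ R M c) x = 0 := by
  have hρ : ContinuousAt (fun y : E => ‖y - x₀‖) x :=
    (continuous_norm.comp (continuous_sub_right x₀)).continuousAt
  suffices ∃ a : ℝ, moserFunction x₀ R M c =ᶠ[𝓝 x] fun _ => a by
    obtain ⟨a, ha⟩ := this
    rw [ha.fderiv_eq, fderiv_const_apply]
  rcases not_and_or.1 hx with hxr | hRx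
  · exact ⟨_, (hρ.eventually (eventually_lt_nhds (not_le.1 hxr))).mono
      fun y hy => moserFunction_of_norm_sub_lt hR hy⟩
  · exact ⟨0, (hρ.eventually (eventually_gt_nhds (not_le.1 hRx))).mono
      fun y hy => moserFunction_of_le_norm_sub hR hy.le⟩

theorem norm_fderiv_moserFunction_le_of_mem_Icc [InnerProductSpace ℝ E] (hR : 0 < R)
    (hc : 0 ≤ c) {x : E} (hx : ‖x - x₀‖ ∈ Icc (R * exp (-M)) R) :
    ‖fderiv ℝ (moserFunction x₀ R M c) x‖ ≤ c / ‖x - x₀‖ := by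
  set s := ‖x - x₀‖
  have hr : 0 < R * exp (-M) := by positivity
  have hs : 0 < s := hr.trans_le hx.1
  have hq : (R * exp (-M) / 2) ^ 2 < s ^ 2 := by nlinarith [hx.1]
  have hsq : HasFDerivAt (fun y : E => ‖y - x₀‖ ^ 2)
      (2 • (innerSL ℝ (x - x₀)).comp (ContinuousLinearMap.id ℝ E)) x :=
    ((hasFDerivAt_id x).sub_const x₀).norm_sq
  have hu : HasFDerivAt (moserFunction x₀ R M c)
      (c • (plateau M (log R - log (s ^ 2) / 2) * -(2 * s ^ 2)⁻¹) •
        (2 • (innerSL ℝ (x - x₀)).comp (ContinuousLinearMap.id ℝ E))) x :=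
    ((hasDerivAt_radialProfile hq).comp_hasFDerivAt x hsq).const_mul c
      |>.congr_of_eventuallyEq (.of_forall fun _ => rfl)
  have hL : ‖2 • (innerSL ℝ (x - x₀)).comp (ContinuousLinearMap.id ℝ E)‖ ≤ 2 * s := by
    rw [ContinuousLinearMap.comp_id]
    exact norm_nsmul_le.trans (by rw [innerSL_apply_norm, Nat.cast_ofNat])
  have hχ := plateau_le_one M (log R - log (s ^ 2) / 2)
  have hχ₀ := plateau_nonneg M (log R - log (s ^ 2) / 2)
  rw [hu.fderiv, norm_smul, norm_smul, Real.norm_of_nonneg hc, norm_mul, norm_neg, norm_inv,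
    Real.norm_of_nonneg hχ₀, Real.norm_of_nonneg (by positivity)]
  calc c * (plateau M (log R - log (s ^ 2) / 2) * (2 * s ^ 2)⁻¹ * _)
      ≤ c * (1 * (2 * s ^ 2)⁻¹ * (2 * s)) := by gcongr
    _ = c / s := by field_simp

theorem norm_fderiv_moserFunction_le [InnerProductSpace ℝ E] (hR : 0 < R) (hc : 0 ≤ c) (x : E) :
    ‖fderiv ℝ (moserFunction x₀ R M c) x‖ ≤
      (Icc (R * exp (-M)) R).indicator (fun t => c / t) ‖x - x₀‖ := by
  by_cases hx : ‖x - x₀‖ ∈ Icc (R * exp (-M)) R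
  · rw [indicator_of_mem hx]
    exact norm_fderiv_moserFunction_le_of_mem_Icc hR hc hx
  · rw [indicator_of_notMem hx, fderiv_moserFunction_eq_zero hR hx, norm_zero]

end RadialFunction

theorem sub_mul_le_rpow_sub_mul_rpow_one_sub {M a p : ℝ} (hM : 0 < M) (haM : a ≤ M)
    (hp : 1 ≤ p) : M - p * a ≤ (M - a) ^ p * M ^ (1 - p) := by
  have hBernoulli := one_add_mul_self_le_rpow_one_add
    (neg_le_neg ((div_le_one hM).2 haM) : -1 ≤ -(a / M)) hp
  calc M - p * a = M * (1 + p * -(a / M)) := by field_simp; ring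
    _ ≤ M * (1 + -(a / M)) ^ p := by gcongr
    _ = (M - a) ^ p * M ^ (1 - p) := by
      rw [show 1 + -(a / M) = (M - a) / M by field_simp; ring, div_rpow (sub_nonneg.2 haM) hM.le,
        rpow_sub hM, rpow_one]
      ring

/-- With `c = moserCoeff d ω M` the Moser function has energy `ω c^d M = 1`. -/
def moserCoeff (d : ℕ) (ω M : ℝ) : ℝ := ((ω * M) ^ ((d : ℝ)⁻¹))⁻¹

theorem moserCoeff_nonneg (d : ℕ) {ω M : ℝ} (h : 0 ≤ ω * M) : 0 ≤ moserCoeff d ω M :=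
  inv_nonneg.2 (rpow_nonneg h _)

theorem moserCoeff_pow {d : ℕ} (hd : d ≠ 0) {ω M : ℝ} (h : 0 ≤ ω * M) :
    moserCoeff d ω M ^ d = (ω * M)⁻¹ := by
  rw [moserCoeff, inv_pow, rpow_inv_natCast_pow h hd]

theorem moserCoeff_rpow {d : ℕ} (hd : 2 ≤ d) {ω M : ℝ} (hω : 0 < ω) (hM : 0 < M) :
    moserCoeff d ω M ^ ((d : ℝ) / (d - 1)) =
      M ^ (1 - (d : ℝ) / (d - 1)) / ω ^ (1 / (d - 1 : ℝ)) := by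
  have hd0 : (d : ℝ) ≠ 0 := by positivity
  have hd1 : (d : ℝ) - 1 ≠ 0 := sub_ne_zero.2 (by exact_mod_cast (by omega : d ≠ 1))
  rw [moserCoeff, inv_rpow (by positivity), ← rpow_mul (by positivity), mul_rpow hω.le hM.le,
    show 1 - (d : ℝ) / (d - 1) = -((d : ℝ)⁻¹ * (d / (d - 1))) by field_simp; ring,
    show (1 : ℝ) / (d - 1) = (d : ℝ)⁻¹ * (d / (d - 1)) by field_simp, rpow_neg hM.le]
  ring

theorem mul_sub_le_mul_moserCoeff_mul_smoothClamp_rpow {d : ℕ} (hd : 2 ≤ d) {ω M β : ℝ}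
    (hω : 0 < ω) (hM : 2 ≤ M) (hβ : 0 ≤ β) :
    β / ω ^ (1 / (d - 1 : ℝ)) * (M - 2 * (d / (d - 1))) ≤
      β * (moserCoeff d ω M * smoothClamp M M) ^ ((d : ℝ) / (d - 1)) := by
  have hd1 : (1 : ℝ) < d := by exact_mod_cast hd
  have hp : 1 ≤ (d : ℝ) / (d - 1) := (one_le_div (by linarith)).2 (by linarith)
  have hc := moserCoeff_nonneg d (mul_pos hω (by linarith : (0 : ℝ) < M)).le
  rw [mul_comm 2]
  calc β / ω ^ (1 / (d - 1 : ℝ)) * (M - d / (d - 1) * 2)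
      ≤ β / ω ^ (1 / (d - 1 : ℝ)) *
          ((M - 2) ^ ((d : ℝ) / (d - 1)) * M ^ (1 - (d : ℝ) / (d - 1))) := by
        gcongr
        exact sub_mul_le_rpow_sub_mul_rpow_one_sub (by linarith) hM hp
    _ = β * (moserCoeff d ω M * (M - 2)) ^ ((d : ℝ) / (d - 1)) := by
        rw [mul_rpow hc (by linarith), moserCoeff_rpow hd hω (by linarith)]
        ring
    _ ≤ β * (moserCoeff d ω M * smoothClamp M M) ^ ((d : ℝ) / (d - 1)) := by
        gcongr
        exact sub_two_le_smoothClamp_self hM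

theorem measureReal_ball_pos {X : Type*} [PseudoMetricSpace X] [ProperSpace X]
    [MeasurableSpace X] (μ : Measure X) [μ.IsOpenPosMeasure] [IsFiniteMeasureOnCompacts μ]
    (x : X) {r : ℝ} (hr : 0 < r) : 0 < μ.real (ball x r) :=
  ENNReal.toReal_pos (measure_ball_pos μ x hr).ne' measure_ball_lt_top.ne

theorem eqOn_pow_pred_smul_indicator_div_pow {d : ℕ} (hd : d ≠ 0) (r R c : ℝ) :
    EqOn (fun t : ℝ => t ^ (d - 1) • (Icc r R).indicator (fun t => c / t) t ^ d)
      ((Icc r R).indicator fun t => c ^ d * t⁻¹) (Ioi 0) := by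
  intro t ht
  obtain ⟨k, rfl⟩ := Nat.exists_eq_add_one_of_ne_zero hd
  by_cases htrR : t ∈ Icc r R
  · simp only [indicator_of_mem htrR, Nat.add_sub_cancel, smul_eq_mul, div_pow]
    field_simp [(mem_Ioi.1 ht).ne']
    ring
  · simp [indicator_of_notMem htrR]

section PolarCoordinates

variable {E : Type*} [NormedAddCommGroup E] [NormedSpace ℝ E] [FiniteDimensional ℝ E]
  [MeasurableSpace E] [BorelSpace E] (μ : Measure E) [μ.IsAddHaarMeasure] [Nontrivial E]
  {d : ℕ} {r R c : ℝ}

theorem integrable_indicator_div_norm_pow (hd : finrank ℝ E = d) (hr : 0 < r) :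
    Integrable (fun y : E => (Icc r R).indicator (fun t => c / t) ‖y‖ ^ d) μ := by
  refine (integrable_fun_norm_addHaar μ
    (f := fun t => (Icc r R).indicator (fun t => c / t) t ^ d)).2 ?_
  rw [hd, integrableOn_congr_fun
    (eqOn_pow_pred_smul_indicator_div_pow (hd ▸ finrank_pos.ne') r R c) measurableSet_Ioi]
  refine (ContinuousOn.integrableOn_Icc ?_).integrable_indicator measurableSet_Icc |>.integrableOn
  exact continuousOn_const.mul (continuousOn_inv₀.mono fun t ht => (hr.trans_le ht.1).ne')

theorem integral_indicator_div_norm_pow (hd : finrank ℝ E = d) (hr : 0 < r) (hrR : r ≤ R) :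
    ∫ y : E, (Icc r R).indicator (fun t => c / t) ‖y‖ ^ d ∂μ =
      d * μ.real (ball 0 1) * c ^ d * log (R / r) := by
  rw [integral_fun_norm_addHaar μ (fun t => (Icc r R).indicator (fun t => c / t) t ^ d), hd,
    setIntegral_congr_fun measurableSet_Ioi
      (eqOn_pow_pred_smul_indicator_div_pow (hd ▸ finrank_pos.ne') r R c),
    setIntegral_indicator measurableSet_Icc,
    inter_eq_self_of_subset_right fun t ht => mem_Ioi.2 (hr.trans_le ht.1),
    integral_Icc_eq_integral_Ioc, ← intervalIntegral.integral_of_le hrR,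
    intervalIntegral.integral_const_mul, integral_inv_of_pos hr (hr.trans_le hrR), nsmul_eq_mul,
    smul_eq_mul]
  ring

end PolarCoordinates

section Integral

variable {E : Type*} [NormedAddCommGroup E] [InnerProductSpace ℝ E] [FiniteDimensional ℝ E]
  [MeasurableSpace E] [BorelSpace E] (μ : Measure E) [μ.IsAddHaarMeasure] [Nontrivial E]
  {d : ℕ} {R c : ℝ}

theorem setIntegral_norm_gradient_moserFunction_pow_le (hd : finrank ℝ E = d) (x₀ : E)
    (hR : 0 < R) {M : ℝ} (hM : 0 ≤ M) (hc : 0 ≤ c) (s : Set E) :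
    ∫ x in s, ‖gradient (moserFunction x₀ R M c) x‖ ^ d ∂μ ≤
      d * μ.real (ball 0 1) * c ^ d * M := by
  set F := fun y : E => (Icc (R * exp (-M)) R).indicator (fun t => c / t) ‖y‖ ^ d
  have hr : 0 < R * exp (-M) := by positivity
  have hF : Integrable (fun x => F (x - x₀)) μ :=
    (integrable_indicator_div_norm_pow μ hd hr).comp_sub_right x₀
  have hF₀ : ∀ y, 0 ≤ F y := fun y =>
    pow_nonneg (indicator_nonneg (fun t ht => div_nonneg hc (hr.le.trans ht.1)) _) d
  have hbound (x : E) : ‖gradient (moserFunction x₀ R M c) x‖ ^ d ≤ F (x - x₀) := by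
    rw [gradient, (InnerProductSpace.toDual ℝ E).symm.norm_map]
    exact pow_le_pow_left₀ (norm_nonneg _) (norm_fderiv_moserFunction_le hR hc x) d
  calc ∫ x in s, ‖gradient (moserFunction x₀ R M c) x‖ ^ d ∂μ
      ≤ ∫ x in s, F (x - x₀) ∂μ :=
        integral_mono_of_nonneg (.of_forall fun _ => by positivity) hF.integrableOn
          (.of_forall hbound)
    _ ≤ ∫ x, F (x - x₀) ∂μ := setIntegral_le_integral hF (.of_forall fun x => hF₀ _)
    _ = ∫ x, F x ∂μ := integral_sub_right_eq_self F x₀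
    _ = d * μ.real (ball 0 1) * c ^ d * log (R / (R * exp (-M))) :=
        integral_indicator_div_norm_pow μ hd hr
          (mul_le_of_le_one_right hR.le (exp_le_one_iff.2 (neg_nonpos.2 hM)))
    _ = d * μ.real (ball 0 1) * c ^ d * M := by
        rw [div_mul_cancel_left₀ hR.ne', ← exp_neg, neg_neg, log_exp]

theorem setIntegral_norm_gradient_moserFunction_pow_le_one (hd : finrank ℝ E = d) (x₀ : E)
    (hR : 0 < R) {M : ℝ} (hM : 0 < M) (s : Set E) :
    ∫ x in s, ‖gradient (moserFunction x₀ R M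
      (moserCoeff d (d * μ.real (ball 0 1)) M)) x‖ ^ d ∂μ ≤ 1 := by
  have hω : 0 < d * μ.real (ball 0 1) :=
    mul_pos (Nat.cast_pos.2 (hd ▸ finrank_pos)) (measureReal_ball_pos μ 0 one_pos)
  refine (setIntegral_norm_gradient_moserFunction_pow_le μ hd x₀ hR hM.le
    (moserCoeff_nonneg d (by positivity)) s).trans_eq ?_
  rw [mul_assoc _ (moserCoeff _ _ _ ^ d), moserCoeff_pow (hd ▸ finrank_pos.ne') (by positivity)]
  field_simp
  exact div_self hω.ne'

theorem mul_exp_le_setIntegral_exp_moserFunction (hd : finrank ℝ E = d) (x₀ : E) (hR : 0 < R)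
    {M : ℝ} (hM : 0 ≤ M) (hc : 0 ≤ c) {β p : ℝ} (hp : 0 ≤ p) {Ω : Set E}
    (hΩ : Bornology.IsBounded Ω) (hRΩ : ball x₀ R ⊆ Ω) :
    (R * exp (-M)) ^ d * μ.real (ball 0 1) * exp (β * (c * smoothClamp M M) ^ p) ≤
      ∫ x in Ω, exp (β * |moserFunction x₀ R M c x| ^ p) ∂μ := by
  set r := R * exp (-M)
  have hr : 0 < r := by positivity
  have hrΩ : ball x₀ r ⊆ Ω := (ball_subset_ball
    (mul_le_of_le_one_right hR.le (exp_le_one_iff.2 (neg_nonpos.2 hM)))).trans hRΩ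
  have hcont : Continuous fun x => exp (β * |moserFunction x₀ R M c x| ^ p) :=
    continuous_exp.comp (continuous_const.mul
      ((contDiff_moserFunction hR).continuous.abs.rpow_const fun _ => Or.inr hp))
  have hint : IntegrableOn (fun x => exp (β * |moserFunction x₀ R M c x| ^ p)) Ω μ :=
    (hcont.continuousOn.integrableOn_compact hΩ.isCompact_closure).mono_set subset_closure
  have hball : EqOn (fun x => exp (β * |moserFunction x₀ R M c x| ^ p))
      (fun _ => exp (β * (c * smoothClamp M M) ^ p)) (ball x₀ r) := fun x hx => by
    rw [mem_ball, dist_eq_norm] at hx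
    simp only [moserFunction_of_norm_sub_lt hR hx,
      abs_of_nonneg (mul_nonneg hc (smoothClamp_nonneg M hM))]
  have hvol : μ.real (ball x₀ r) = r ^ d * μ.real (ball 0 1) := by
    rw [measureReal_def, μ.addHaar_ball x₀ hr.le, ENNReal.toReal_mul,
      ENNReal.toReal_ofReal (by positivity), hd, measureReal_def]
  calc r ^ d * μ.real (ball 0 1) * exp (β * (c * smoothClamp M M) ^ p)
      = ∫ x in ball x₀ r, exp (β * |moserFunction x₀ R M c x| ^ p) ∂μ := by
        rw [setIntegral_congr_fun measurableSet_ball hball, setIntegral_const, smul_eq_mul, hvol]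
    _ ≤ ∫ x in Ω, exp (β * |moserFunction x₀ R M c x| ^ p) ∂μ :=
        setIntegral_mono_set hint (.of_forall fun _ => (exp_pos _).le) hrΩ.eventuallyLE

theorem tendsto_setIntegral_exp_moserFunction (hd : finrank ℝ E = d) (hd2 : 2 ≤ d) (x₀ : E)
    (hR : 0 < R) {Ω : Set E} (hΩ : Bornology.IsBounded Ω) (hRΩ : ball x₀ R ⊆ Ω) {β : ℝ}
    (hβ : d * (d * μ.real (ball 0 1)) ^ (1 / (d - 1 : ℝ)) < β) :
    Tendsto (fun M => ∫ x in Ω, exp (β * |moserFunction x₀ R M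
      (moserCoeff d (d * μ.real (ball 0 1)) M) x| ^ ((d : ℝ) / (d - 1))) ∂μ) atTop atTop := by
  set ω := d * μ.real (ball 0 1)
  set p := (d : ℝ) / (d - 1)
  set γ := β / ω ^ (1 / (d - 1 : ℝ))
  have hd1 : (1 : ℝ) < d := by exact_mod_cast hd2
  have hB : 0 < μ.real (ball 0 1) := measureReal_ball_pos μ 0 one_pos
  have hω : 0 < ω := mul_pos (by positivity) hB
  have hp : 0 ≤ p := div_nonneg (by positivity) (by linarith)
  have hγ : d < γ := (lt_div_iff₀ (by positivity)).2 hβ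
  have hβ0 : 0 ≤ β := (by positivity : (0 : ℝ) ≤ d * ω ^ (1 / (d - 1 : ℝ))).trans hβ.le
  have hlower (M : ℝ) (hM : 2 ≤ M) :
      R ^ d * μ.real (ball 0 1) * exp (-(2 * γ * p)) * exp ((γ - d) * M) ≤
        ∫ x in Ω, exp (β * |moserFunction x₀ R M (moserCoeff d ω M) x| ^ p) ∂μ := by
    have hexp : exp (d * -M) * exp (γ * (M - 2 * p)) =
        exp (-(2 * γ * p)) * exp ((γ - d) * M) := by
      rw [← exp_add, ← exp_add]
      ring_nf
    calc R ^ d * μ.real (ball 0 1) * exp (-(2 * γ * p)) * exp ((γ - d) * M)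
        = (R * exp (-M)) ^ d * μ.real (ball 0 1) * exp (γ * (M - 2 * p)) := by
          rw [mul_pow, ← exp_nat_mul]
          linear_combination (-(R ^ d * μ.real (ball 0 1))) * hexp
      _ ≤ (R * exp (-M)) ^ d * μ.real (ball 0 1) *
            exp (β * (moserCoeff d ω M * smoothClamp M M) ^ p) := by
          gcongr _ * exp ?_
          exact mul_sub_le_mul_moserCoeff_mul_smoothClamp_rpow hd2 hω hM hβ0
      _ ≤ _ := mul_exp_le_setIntegral_exp_moserFunction μ hd x₀ hR (by linarith)
          (moserCoeff_nonneg d (by positivity)) hp hΩ hRΩ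
  refine tendsto_atTop_mono' _ ((eventually_ge_atTop 2).mono hlower) ?_
  exact (tendsto_exp_atTop.comp (tendsto_id.const_mul_atTop (sub_pos.2 hγ))).const_mul_atTop
    (by positivity)

end Integral

end

end Moser

open Moser

/-- Sharpness of the constant `α_n = n ω_{n-1}^{1/(n-1)}` in Moser's inequality: for every
nonempty bounded open `Ω ⊆ ℝⁿ` and every `β > α_n`, the supremum of
`∫_Ω exp(β |u|^{n/(n-1)})` over smooth `u` with compact support in `Ω` and
`∫_Ω |∇u|ⁿ ≤ 1` is `+∞`. -/
theorem moser_sharpness (n : ℕ) (hn : 2 ≤ n) (Ω : Set (EuclideanSpace ℝ (Fin n)))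
    (hΩo : IsOpen Ω) (hΩb : Bornology.IsBounded Ω) (hΩne : Ω.Nonempty)
    (β : ℝ) (hβ : (n : ℝ) * sphereArea n ^ ((1 : ℝ) / ((n : ℝ) - 1)) < β) :
    ∀ C : ℝ, ∃ u : EuclideanSpace ℝ (Fin n) → ℝ, ContDiff ℝ (⊤ : ℕ∞) u ∧
      HasCompactSupport u ∧ tsupport u ⊆ Ω ∧
      (∫ x in Ω, ‖gradient u x‖ ^ n) ≤ 1 ∧
      C < ∫ x in Ω, Real.exp (β * |u x| ^ ((n : ℝ) / ((n : ℝ) - 1))) := by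
  intro C
  have hd : finrank ℝ (EuclideanSpace ℝ (Fin n)) = n := finrank_euclideanSpace_fin
  have : Nontrivial (EuclideanSpace ℝ (Fin n)) :=
    Module.nontrivial_of_finrank_pos (R := ℝ) (by omega)
  obtain ⟨x₀, hx₀⟩ := hΩne
  obtain ⟨R, hR, hRΩ⟩ := nhds_basis_closedBall.mem_iff.1 (hΩo.mem_nhds hx₀)
  obtain ⟨M, hC, hM⟩ := ((tendsto_setIntegral_exp_moserFunction volume hd hn x₀ hR hΩb
    (ball_subset_closedBall.trans hRΩ) hβ).eventually_gt_atTop C |>.and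
      (eventually_gt_atTop 0)).exists
  exact ⟨_, contDiff_moserFunction hR, hasCompactSupport_moserFunction hR,
    (tsupport_moserFunction_subset hR).trans hRΩ,
    setIntegral_norm_gradient_moserFunction_pow_le_one volume hd x₀ hR hM Ω, hC⟩
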